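/- Let b ≥ 1 and τ ∈ {τ^b_0, τ^b_1}, or b ≥ 2 and τ ∈ {τ^b_2, τ^b_3}. Let U = U(A_0, …, A_n) be a union of TSs such that for every event e ∈ E_U there is a state s ∈ S_U at which e does not occur. Then U has the τ-ESSP if and only if the joining A(U) has the τ-ESSP, and U has the τ-SSP if and only if A(U) has the τ-SSP. -/

import Mathlib

/-! ## Transition systems -/

/-- A transition system over ambient state type `S` and event type `E`:
a set of states, a set of events, and a (deterministic or not) labeled
transition relation whose transitions stay inside the state/event sets. -/
structure TS (S E : Type) where
  states : Set S
  events : Set E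
  tr : S → E → S → Prop
  tr_mem : ∀ ⦃s e s'⦄, tr s e s' → s ∈ states ∧ e ∈ events ∧ s' ∈ states

/-- Event `e` occurs at state `s`. -/
def TS.occurs {S E : Type} (A : TS S E) (e : E) (s : S) : Prop := ∃ s', A.tr s e s'

/-! ## The types of nets `τ^b_t`, `t ∈ {0,1,2,3}` -/

/-- Events of the types of nets: pairs `(m,n)` or group events `c ∈ ℤ_{b+1}`. -/
inductive Tev where
  | pr (m n : ℕ)
  | gr (c : ℕ)
deriving DecidableEq

def Tev.minus : Tev → ℕ | .pr m _ => m | .gr _ => 0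
def Tev.plus : Tev → ℕ | .pr _ n => n | .gr _ => 0
def Tev.absv : Tev → ℕ | .pr _ _ => 0 | .gr c => c

/-- Membership in the event set of the type `τ^b_t`:
for `t ∈ {1,3}` (pure types) the pair events `(m,n)` with `m,n ≥ 1` are discarded;
for `t ∈ {2,3}` the pair `(0,0)` is discarded and the group events `0,…,b` are present;
for `t ∈ {0,1}` there are no group events. -/
def tevOk (b t : ℕ) : Tev → Prop
  | .pr m n => m ≤ b ∧ n ≤ b ∧ ((t = 1 ∨ t = 3) → (m = 0 ∨ n = 0)) ∧
      ((t = 2 ∨ t = 3) → ¬(m = 0 ∧ n = 0))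
  | .gr c => c ≤ b ∧ (t = 2 ∨ t = 3)

/-- The partial transition function of the types `τ^b_t` on the states `{0,…,b}`. -/
def tevStep (b s : ℕ) : Tev → Option ℕ
  | .pr m n => if m ≤ s ∧ s - m + n ≤ b then some (s - m + n) else none
  | .gr c => some ((s + c) % (b + 1))

/-! ## Regions, ESSP and SSP -/

/-- A `τ^b_t`-region of a transition system `A`. -/
structure Region (b t : ℕ) {S E : Type} (A : TS S E) where
  sup : S → ℕ
  sig : E → Tev
  sup_le : ∀ s ∈ A.states, sup s ≤ b
  sig_ok : ∀ e ∈ A.events, tevOk b t (sig e)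
  resp : ∀ ⦃s e s'⦄, A.tr s e s' → tevStep b (sup s) (sig e) = some (sup s')

/-- A region solves the ESSP atom `(e,s)` if `sig e` does not occur at `sup s` in `τ`. -/
def Region.solvesESSP {b t : ℕ} {S E : Type} {A : TS S E} (R : Region b t A)
    (e : E) (s : S) : Prop :=
  tevStep b (R.sup s) (R.sig e) = none

/-- A region solves the SSP atom `(s,s')` if `sup s ≠ sup s'`. -/
def Region.solvesSSP {b t : ℕ} {S E : Type} {A : TS S E} (R : Region b t A)
    (s s' : S) : Prop :=
  R.sup s ≠ R.sup s'

/-- `A` has the `τ^b_t`-ESSP: every ESSP atom is solvable. -/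
def TS.hasESSP (b t : ℕ) {S E : Type} (A : TS S E) : Prop :=
  ∀ e ∈ A.events, ∀ s ∈ A.states, ¬ A.occurs e s → ∃ R : Region b t A, R.solvesESSP e s

/-- `A` has the `τ^b_t`-SSP: every SSP atom is solvable. -/
def TS.hasSSP (b t : ℕ) {S E : Type} (A : TS S E) : Prop :=
  ∀ s ∈ A.states, ∀ s' ∈ A.states, s ≠ s' → ∃ R : Region b t A, R.solvesSSP s s'

/-- `A` is `τ^b_t`-feasible. -/
def TS.feasible (b t : ℕ) {S E : Type} (A : TS S E) : Prop :=
  A.hasESSP b t ∧ A.hasSSP b t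

/-! ## Combinators: linear TSs, relabeled states, unions -/

/-- The linear TS given by the word `w`: states `0,…,w.length`, and an
`e`-labeled transition from `s` to `s+1` whenever `w[s] = e`. -/
def TS.chain {E : Type} (w : List E) : TS ℕ E where
  states := {s | s ≤ w.length}
  events := {e | e ∈ w}
  tr s e s' := w[s]? = some e ∧ s' = s + 1
  tr_mem := by
    rintro s e s' ⟨h, rfl⟩
    have hs : s < w.length := by
      by_contra hc
      rw [List.getElem?_eq_none (Nat.le_of_not_lt hc)] at h
      cases h
    obtain ⟨hlt, rfl⟩ := List.getElem?_eq_some_iff.mp h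
    exact ⟨Nat.le_of_lt hs, List.getElem_mem hlt, hs⟩

/-- Renaming the states of a TS along `f`. -/
def TS.mapStates {S S' E : Type} (f : S → S') (A : TS S E) : TS S' E where
  states := f '' A.states
  events := A.events
  tr s e s' := ∃ a a', A.tr a e a' ∧ s = f a ∧ s' = f a'
  tr_mem := by
    rintro s e s' ⟨a, a', h, rfl, rfl⟩
    obtain ⟨h1, h2, h3⟩ := A.tr_mem h
    exact ⟨⟨a, h1, rfl⟩, h2, ⟨a', h3, rfl⟩⟩

/-- The union `U(A_i)_{i : ι}` of a family of TSs over the same ambient types. -/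
def TS.unionFam {ι S E : Type} (F : ι → TS S E) : TS S E where
  states := ⋃ i, (F i).states
  events := ⋃ i, (F i).events
  tr s e s' := ∃ i, (F i).tr s e s'
  tr_mem := by
    rintro s e s' ⟨i, h⟩
    obtain ⟨h1, h2, h3⟩ := (F i).tr_mem h
    exact ⟨Set.mem_iUnion.2 ⟨i, h1⟩, Set.mem_iUnion.2 ⟨i, h2⟩, Set.mem_iUnion.2 ⟨i, h3⟩⟩

/-- The SSP for a union: all SSP atoms given by distinct states of the *same*
constituent are solvable by regions of the union. -/
def unionSSP (b t : ℕ) {ι S E : Type} (F : ι → TS S E) : Prop :=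
  ∀ i : ι, ∀ s ∈ (F i).states, ∀ s' ∈ (F i).states, s ≠ s' →
    ∃ R : Region b t (TS.unionFam F), R.solvesSSP s s'
/-! ## Cubic monotone one-in-three 3-SAT -/

/-- An instance `φ = {C_0,…,C_{m-1}}` of cubic monotone one-in-three 3-SAT with
variables `V(φ) = {X_0,…,X_{m-1}}` (identified with `Fin m`): every clause
`C_i = {X_{i,0}, X_{i,1}, X_{i,2}}` consists of three distinct variables and every
variable occurs in exactly three clauses. -/
structure SatInstance (m : ℕ) where
  C : Fin m → Fin 3 → Fin m
  clause_distinct : ∀ i : Fin m, Function.Injective (C i)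
  cubic : ∀ v : Fin m,
    (Finset.univ.filter (fun p : Fin m × Fin 3 => C p.1 p.2 = v)).card = 3

/-- `M` is a one-in-three model of `φ`: every clause contains exactly one variable of `M`. -/
def SatInstance.model {m : ℕ} (φ : SatInstance m) (M : Set (Fin m)) : Prop :=
  ∀ i : Fin m, ∃! r : Fin 3, φ.C i r ∈ M

/-! ## Events of the gadgets -/

inductive Ev where
  | k | z | z0 | z1 | o0 | o1 | o2 | u
  | kj (j : ℕ)  -- the interface events k_j
  | x (i : ℕ)   -- the events x_i
  | p (i : ℕ)   -- the events p_i
  | vj (j : ℕ)  -- the events v_j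
  | X (v : ℕ)   -- the variable events X_v
deriving DecidableEq

/-! ## The gadget TSs (states are pairs (tag, position)) -/

/-- `H_0`, with `h_{0,i} = (0,i)`. -/
def H0 (b : ℕ) : TS (ℕ × ℕ) Ev :=
  (TS.chain (List.replicate b Ev.k ++ List.replicate b Ev.z ++ [Ev.o0] ++
    List.replicate b Ev.k ++ List.replicate b Ev.z ++ List.replicate b Ev.o1 ++
    List.replicate b Ev.k)).mapStates (fun i => (0, i))

/-- `H_1`, with `h_{1,i} = (0,i)`. -/
def H1 (b : ℕ) : TS (ℕ × ℕ) Ev :=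
  (TS.chain (List.replicate b Ev.k ++ [Ev.z0, Ev.o0] ++ List.replicate b Ev.k ++
    [Ev.z1, Ev.z0, Ev.o2] ++ List.replicate b Ev.k)).mapStates (fun i => (0, i))

/-- `H_2`, with `h_{2,i} = (0,i)`. -/
def H2 (b : ℕ) : TS (ℕ × ℕ) Ev :=
  (TS.chain (List.replicate b Ev.k ++ [Ev.o0] ++ List.replicate b Ev.k ++
    [Ev.o2] ++ List.replicate b Ev.k)).mapStates (fun i => (0, i))

/-- `D_{j,0}`, with `d_{j,0,i} = (j+1,i)`. -/
def D0 (b j : ℕ) : TS (ℕ × ℕ) Ev :=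
  (TS.chain ([Ev.o0, Ev.kj j] ++ List.replicate (b+1) Ev.o1)).mapStates
    (fun i => (j + 1, i))

/-- `D_{j,1}`, with `d_{j,1,i} = (j+1,i)`. -/
def D1 (b j : ℕ) : TS (ℕ × ℕ) Ev :=
  (TS.chain [Ev.o0, Ev.kj j, Ev.o2]).mapStates (fun i => (j + 1, i))

/-- The word of the gadget `T_{i,a}` (`a ∈ {0,1,2}`) of the translator `T`. -/
def Tword (b : ℕ) {m : ℕ} (φ : SatInstance m) (i : Fin m) (a : Fin 3) : List Ev :=
  if a = 0 then
    [Ev.kj (6 * (i : ℕ))] ++ List.replicate b (Ev.X ((φ.C i 0 : Fin m) : ℕ)) ++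
    [Ev.x (i : ℕ)] ++ List.replicate b (Ev.X ((φ.C i 2 : Fin m) : ℕ)) ++
    [Ev.kj (6 * (i : ℕ) + 1)]
  else if a = 1 then
    [Ev.kj (6 * (i : ℕ) + 2)] ++ List.replicate b (Ev.X ((φ.C i 1 : Fin m) : ℕ)) ++
    [Ev.p (i : ℕ), Ev.kj (6 * (i : ℕ) + 3)]
  else
    [Ev.kj (6 * (i : ℕ) + 4), Ev.x (i : ℕ), Ev.p (i : ℕ), Ev.kj (6 * (i : ℕ) + 5)]

/-- The gadget `T_{i,a}` of the translator `T`, with states `t_{i,a,pos} = (tag, pos)`. -/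
def Tgad (b tag : ℕ) {m : ℕ} (φ : SatInstance m) (i : Fin m) (a : Fin 3) :
    TS (ℕ × ℕ) Ev :=
  (TS.chain (Tword b φ i a)).mapStates (fun pos => (tag, pos))

/-- The translator `T = U(T_{0,0}, T_{0,1}, T_{0,2}, …, T_{m-1,2})` (standalone,
with `t_{i,a,pos} = (3i+a+1, pos)`). -/
def Ttrans (b : ℕ) {m : ℕ} (φ : SatInstance m) : TS (ℕ × ℕ) Ev :=
  TS.unionFam (fun q : Fin m × Fin 3 => Tgad b (3 * (q.1 : ℕ) + (q.2 : ℕ) + 1) φ q.1 q.2)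

/-- `H_3`, with `h_{3,0,i} = (0,i)` and `h_{3,1,i} = (1,i)`: the union of the path
`h_{3,0,0} --k^b--> h_{3,0,b}` and the path
`h_{3,0,0} --u--> h_{3,1,0} --k^{b-1}--> h_{3,1,b-1} --z--> h_{3,0,b}`. -/
def H3 (b : ℕ) : TS (ℕ × ℕ) Ev :=
  TS.unionFam (fun c : Bool =>
    if c then (TS.chain (List.replicate b Ev.k)).mapStates (fun i => (0, i))
    else (TS.chain ([Ev.u] ++ List.replicate (b-1) Ev.k ++ [Ev.z])).mapStates
      (fun i => if i = 0 then (0, 0) else if i = b + 1 then (0, b) else (1, i - 1)))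

/-- The set `E_0 = {(m,m) : 1 ≤ m ≤ b} ∪ {0}`. -/
def Ezero (b : ℕ) : Set Tev :=
  {e | (∃ q, 1 ≤ q ∧ q ≤ b ∧ e = Tev.pr q q) ∨ e = Tev.gr 0}

/-- The first row `f_{j,0,0} --k^b--> f_{j,0,b}` of `F_j`, with `f_{j,0,i} = (4j+2, i)`. -/
def Fch0 (b j : ℕ) : TS (ℕ × ℕ) Ev :=
  (TS.chain (List.replicate b Ev.k)).mapStates (fun i => (4 * j + 2, i))

/-- The second row `f_{j,0,0} --v_j--> f_{j,1,0} --k^{b-1}--> f_{j,1,b-1} --X_j--> f_{j,0,b}`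
of `F_j`, with `f_{j,1,i} = (4j+3, i)`. -/
def Fch1 (b j : ℕ) : TS (ℕ × ℕ) Ev :=
  (TS.chain ([Ev.vj j] ++ List.replicate (b-1) Ev.k ++ [Ev.X j])).mapStates
    (fun i => if i = 0 then (4 * j + 2, 0) else if i = b + 1 then (4 * j + 2, b)
      else (4 * j + 3, i - 1))

/-- `F_j` as the union of its two rows. -/
def Fgad (b j : ℕ) : TS (ℕ × ℕ) Ev :=
  TS.unionFam (fun c : Bool => if c then Fch0 b j else Fch1 b j)

/-- `G_j`, with `g_{j,i} = (4j+4, i)`. -/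
def Ggad (b j : ℕ) : TS (ℕ × ℕ) Ev :=
  (TS.chain (List.replicate b Ev.k ++ [Ev.X j])).mapStates (fun i => (4 * j + 4, i))

/-- The clause gadget `T_i` (of the translator for the group-extended types),
with `t_{i,pos} = (4i+5, pos)`. -/
def Tgad2 (b : ℕ) {m : ℕ} (φ : SatInstance m) (i : Fin m) : TS (ℕ × ℕ) Ev :=
  (TS.chain (List.replicate b Ev.k ++
    [Ev.X ((φ.C i 0 : Fin m) : ℕ), Ev.X ((φ.C i 1 : Fin m) : ℕ),
     Ev.X ((φ.C i 2 : Fin m) : ℕ), Ev.z] ++ List.replicate b Ev.k)).mapStates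
    (fun pos => (4 * (i : ℕ) + 5, pos))

/-- The translator `T_τ = U(F_0, G_0, …, F_{m-1}, G_{m-1}, T_0, …, T_{m-1})`
for the group-extended types. -/
def Ttrans2fam (b : ℕ) {m : ℕ} (φ : SatInstance m) : Fin m × Fin 3 → TS (ℕ × ℕ) Ev :=
  fun q => if q.2 = 0 then Fgad b (q.1 : ℕ)
    else if q.2 = 1 then Ggad b (q.1 : ℕ) else Tgad2 b φ q.1

def Ttrans2 (b : ℕ) {m : ℕ} (φ : SatInstance m) : TS (ℕ × ℕ) Ev :=
  TS.unionFam (Ttrans2fam b φ)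
/-! ## The key unions and the unions of key and translator -/

/-- The family of constituents of the key `K_{τ^b_0} = U(H_0, D_{0,0},…,D_{6m-1,0})`. -/
def K0fam (b m : ℕ) : Option (Fin (6 * m)) → TS (ℕ × ℕ) Ev
  | none => H0 b
  | some j => D0 b (j : ℕ)

def K0 (b m : ℕ) : TS (ℕ × ℕ) Ev := TS.unionFam (K0fam b m)

/-- The family of constituents of the key `K_{τ^b_1} = U(H_1, D_{0,1},…,D_{6m-1,1})`. -/
def K1fam (b m : ℕ) : Option (Fin (6 * m)) → TS (ℕ × ℕ) Ev
  | none => H1 b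
  | some j => D1 b (j : ℕ)

def K1 (b m : ℕ) : TS (ℕ × ℕ) Ev := TS.unionFam (K1fam b m)

/-- The family of constituents of the key `K = U(H_2, D_{0,1},…,D_{6m-1,1})`. -/
def K2fam (b m : ℕ) : Option (Fin (6 * m)) → TS (ℕ × ℕ) Ev
  | none => H2 b
  | some j => D1 b (j : ℕ)

def K2 (b m : ℕ) : TS (ℕ × ℕ) Ev := TS.unionFam (K2fam b m)

/-- The family of constituents of `U_{τ^b_0} = U(H_0, D_{0,0},…,D_{6m-1,0}, T)`. -/
def U0fam (b : ℕ) {m : ℕ} (φ : SatInstance m) :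
    Option (Fin (6 * m) ⊕ Fin m × Fin 3) → TS (ℕ × ℕ) Ev
  | none => H0 b
  | some (.inl j) => D0 b (j : ℕ)
  | some (.inr q) => Tgad b (6 * m + 1 + 3 * (q.1 : ℕ) + (q.2 : ℕ)) φ q.1 q.2

def U0 (b : ℕ) {m : ℕ} (φ : SatInstance m) : TS (ℕ × ℕ) Ev := TS.unionFam (U0fam b φ)

/-- The family of constituents of `U_{τ^b_1} = U(H_1, D_{0,1},…,D_{6m-1,1}, T)`. -/
def U1fam (b : ℕ) {m : ℕ} (φ : SatInstance m) :
    Option (Fin (6 * m) ⊕ Fin m × Fin 3) → TS (ℕ × ℕ) Ev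
  | none => H1 b
  | some (.inl j) => D1 b (j : ℕ)
  | some (.inr q) => Tgad b (6 * m + 1 + 3 * (q.1 : ℕ) + (q.2 : ℕ)) φ q.1 q.2

def U1 (b : ℕ) {m : ℕ} (φ : SatInstance m) : TS (ℕ × ℕ) Ev := TS.unionFam (U1fam b φ)

/-- The family of constituents of `W = U(H_2, D_{0,1},…,D_{6m-1,1}, T)`. -/
def Wfam (b : ℕ) {m : ℕ} (φ : SatInstance m) :
    Option (Fin (6 * m) ⊕ Fin m × Fin 3) → TS (ℕ × ℕ) Ev
  | none => H2 b
  | some (.inl j) => D1 b (j : ℕ)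
  | some (.inr q) => Tgad b (6 * m + 1 + 3 * (q.1 : ℕ) + (q.2 : ℕ)) φ q.1 q.2

def Wun (b : ℕ) {m : ℕ} (φ : SatInstance m) : TS (ℕ × ℕ) Ev := TS.unionFam (Wfam b φ)

/-- The family of constituents of
`U_τ = U(H_3, F_0, G_0, …, F_{m-1}, G_{m-1}, T_0, …, T_{m-1})` for `τ ∈ {τ^b_2, τ^b_3}`. -/
def U2fam (b : ℕ) {m : ℕ} (φ : SatInstance m) :
    Option (Fin m × Fin 3) → TS (ℕ × ℕ) Ev
  | none => H3 b
  | some q => Ttrans2fam b φ q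

def U2 (b : ℕ) {m : ℕ} (φ : SatInstance m) : TS (ℕ × ℕ) Ev := TS.unionFam (U2fam b φ)

/-! ## The joining `A(U)` -/

/-- The joining `A(U)` of a union `U = U(A_0,…,A_n)` of initialized TSs (`A_i`
initialized at `s0 i`): fresh connector states `q_i = Sum.inr i`, fresh events
`w_{i+1} = Sum.inr (Sum.inl i)` (`i : Fin n`) and `y_i = Sum.inr (Sum.inr i)`,
and transitions `q_i --w_{i+1}--> q_{i+1}` and `q_i --y_i--> s0 i`. -/
def joining {S E : Type} {n : ℕ} (F : Fin (n + 1) → TS S E) (s0 : Fin (n + 1) → S)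
    (h0 : ∀ i, s0 i ∈ (F i).states) :
    TS (S ⊕ Fin (n + 1)) (E ⊕ (Fin n ⊕ Fin (n + 1))) where
  states := {st | (∃ a ∈ (TS.unionFam F).states, st = Sum.inl a) ∨ ∃ q, st = Sum.inr q}
  events := {ev | (∃ e ∈ (TS.unionFam F).events, ev = Sum.inl e) ∨ ∃ c, ev = Sum.inr c}
  tr st ev st' :=
    (∃ a e a', (TS.unionFam F).tr a e a' ∧
        st = Sum.inl a ∧ ev = Sum.inl e ∧ st' = Sum.inl a') ∨
    (∃ i : Fin n, st = Sum.inr i.castSucc ∧ ev = Sum.inr (Sum.inl i) ∧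
        st' = Sum.inr i.succ) ∨
    (∃ i : Fin (n + 1), st = Sum.inr i ∧ ev = Sum.inr (Sum.inr i) ∧
        st' = Sum.inl (s0 i))
  tr_mem := by
    rintro st ev st' (⟨a, e, a', h, rfl, rfl, rfl⟩ | ⟨i, rfl, rfl, rfl⟩ | ⟨i, rfl, rfl, rfl⟩)
    · obtain ⟨h1, h2, h3⟩ := (TS.unionFam F).tr_mem h
      exact ⟨Or.inl ⟨a, h1, rfl⟩, Or.inl ⟨e, h2, rfl⟩, Or.inl ⟨a', h3, rfl⟩⟩
    · exact ⟨Or.inr ⟨_, rfl⟩, Or.inr ⟨_, rfl⟩, Or.inr ⟨_, rfl⟩⟩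
    · exact ⟨Or.inr ⟨_, rfl⟩, Or.inr ⟨_, rfl⟩,
        Or.inl ⟨_, Set.mem_iUnion.2 ⟨i, h0 i⟩, rfl⟩⟩

/-! A region of `A(U)` restricts to one of `U`. Conversely, a region of `U` extends to
`A(U)` by putting all connector states `q_i` at one common level `w`, letting every `w_i` act
neutrally and every `y_i` jump from `w` to the level of `s_{0,A_i}`; for an event `e` of `U`,
choosing for `w` the level of a state at which a region inhibits `e` makes that region inhibit
`e` at every connector state as well. The atoms involving connector states or events are solved
by the indicator region of a single connector state, and states of different constituents are
separated by the indicator region of one constituent. -/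

namespace Tev

/-- The loop event: `(0,0)` in `τ^b_0, τ^b_1`, and the group event `0` in `τ^b_2, τ^b_3`,
which lack `(0,0)`. -/
def neutral (t : ℕ) : Tev := if t ≤ 1 then .pr 0 0 else .gr 0

def jump (b t w v : ℕ) : Tev :=
  if t ≤ 1 then (if w ≤ v then .pr 0 (v - w) else .pr (w - v) 0)
  else .gr ((v + (b + 1) - w) % (b + 1))

end Tev

open Tev

theorem tevOk_neutral {b t : ℕ} (ht : t ≤ 3) : tevOk b t (neutral t) := by
  unfold neutral
  split_ifs
  · exact ⟨Nat.zero_le _, Nat.zero_le _, fun _ => Or.inl rfl, fun _ => by omega⟩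
  · exact ⟨Nat.zero_le _, by omega⟩

theorem tevStep_neutral {b s : ℕ} (t : ℕ) (hs : s ≤ b) : tevStep b s (neutral t) = some s := by
  unfold neutral
  split_ifs
  · simp [tevStep, hs]
  · simp [tevStep, Nat.mod_eq_of_lt (Nat.lt_succ_of_le hs)]

theorem tevOk_jump {b t w v : ℕ} (ht : t ≤ 3) (hw : w ≤ b) (hv : v ≤ b) :
    tevOk b t (jump b t w v) := by
  unfold jump
  split_ifs
  · exact ⟨Nat.zero_le _, by omega, fun _ => Or.inl rfl, fun _ => by omega⟩
  · exact ⟨by omega, Nat.zero_le _, fun _ => Or.inr rfl, fun _ => by omega⟩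
  · exact ⟨Nat.lt_succ_iff.mp (Nat.mod_lt _ b.succ_pos), by omega⟩

theorem tevStep_jump {b w v : ℕ} (t : ℕ) (hw : w ≤ b) (hv : v ≤ b) :
    tevStep b w (jump b t w v) = some v := by
  unfold jump
  split_ifs
  · rw [tevStep, if_pos ⟨Nat.zero_le w, by omega⟩]; congr 1; omega
  · rw [tevStep, if_pos ⟨by omega, by omega⟩]; congr 1; omega
  · have hsum : w + (v + (b + 1) - w) = v + (b + 1) := by omega
    simp only [tevStep, Nat.add_mod_mod, hsum, Nat.add_mod_right,
      Nat.mod_eq_of_lt (Nat.lt_succ_of_le hv)]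

theorem tevOk_pr_one_zero {b t : ℕ} (hb : 1 ≤ b) : tevOk b t (.pr 1 0) :=
  ⟨hb, Nat.zero_le _, fun _ => Or.inr rfl, by simp⟩

theorem tevOk_pr_zero_one {b t : ℕ} (hb : 1 ≤ b) : tevOk b t (.pr 0 1) :=
  ⟨Nat.zero_le _, hb, fun _ => Or.inl rfl, by simp⟩

section Joining

variable {S E : Type} {n : ℕ} {F : Fin (n + 1) → TS S E} {s0 : Fin (n + 1) → S}
  {h0 : ∀ i, s0 i ∈ (F i).states} {b t : ℕ}

theorem inl_mem_joining_states {a : S} :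
    Sum.inl a ∈ (joining F s0 h0).states ↔ a ∈ (TS.unionFam F).states := by
  simp [joining]

theorem inl_mem_joining_events {e : E} :
    Sum.inl e ∈ (joining F s0 h0).events ↔ e ∈ (TS.unionFam F).events := by
  simp [joining]

theorem joining_occurs_inl_inl {e : E} {s : S} :
    (joining F s0 h0).occurs (Sum.inl e) (Sum.inl s) ↔ (TS.unionFam F).occurs e s := by
  simp [TS.occurs, joining]

theorem joining_occurs_w (j : Fin n) :
    (joining F s0 h0).occurs (Sum.inr (Sum.inl j)) (Sum.inr j.castSucc) :=
  ⟨_, Or.inr (Or.inl ⟨j, rfl, rfl, rfl⟩)⟩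

theorem joining_occurs_y (i : Fin (n + 1)) :
    (joining F s0 h0).occurs (Sum.inr (Sum.inr i)) (Sum.inr i) :=
  ⟨_, Or.inr (Or.inr ⟨i, rfl, rfl, rfl⟩)⟩

def Region.restrictJoining (R : Region b t (joining F s0 h0)) : Region b t (TS.unionFam F) where
  sup a := R.sup (Sum.inl a)
  sig e := R.sig (Sum.inl e)
  sup_le _ ha := R.sup_le _ (inl_mem_joining_states.2 ha)
  sig_ok _ he := R.sig_ok _ (inl_mem_joining_events.2 he)
  resp _ _ _ h := R.resp (Or.inl ⟨_, _, _, h, rfl, rfl, rfl⟩)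

def Region.extendJoining (R : Region b t (TS.unionFam F)) (ht : t ≤ 3) (w : ℕ) (hw : w ≤ b) :
    Region b t (joining F s0 h0) where
  sup := Sum.elim R.sup fun _ => w
  sig := Sum.elim R.sig (Sum.elim (fun _ => neutral t) fun i => jump b t w (R.sup (s0 i)))
  sup_le := by
    rintro (a | q) hmem
    · exact R.sup_le a (inl_mem_joining_states.1 hmem)
    · exact hw
  sig_ok := by
    rintro (e | j | i) hmem
    · exact R.sig_ok e (inl_mem_joining_events.1 hmem)
    · exact tevOk_neutral ht
    · exact tevOk_jump ht hw (R.sup_le _ (Set.mem_iUnion.2 ⟨i, h0 i⟩))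
  resp := by
    rintro _ _ _ (⟨a, e, a', h, rfl, rfl, rfl⟩ | ⟨j, rfl, rfl, rfl⟩ | ⟨i, rfl, rfl, rfl⟩)
    · exact R.resp h
    · exact tevStep_neutral t hw
    · exact tevStep_jump t hw (R.sup_le _ (Set.mem_iUnion.2 ⟨i, h0 i⟩))

def Region.joiningConnectorIndicator (hb : 1 ≤ b) (ht : t ≤ 3) (k : Fin (n + 1)) :
    Region b t (joining F s0 h0) where
  sup := Sum.elim (fun _ => 0) fun q => if q = k then 1 else 0
  sig := Sum.elim (fun _ => neutral t) <| Sum.elim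
    (fun j => if j.castSucc = k then .pr 1 0 else if j.succ = k then .pr 0 1 else neutral t)
    (fun i => if i = k then .pr 1 0 else neutral t)
  sup_le := by
    rintro (a | q) _
    · exact Nat.zero_le b
    · dsimp only [Sum.elim_inr]; split_ifs <;> omega
  sig_ok := by
    rintro (e | j | i) _
    · exact tevOk_neutral ht
    · dsimp only [Sum.elim_inl, Sum.elim_inr]
      split_ifs
      · exact tevOk_pr_one_zero hb
      · exact tevOk_pr_zero_one hb
      · exact tevOk_neutral ht
    · dsimp only [Sum.elim_inr]
      split_ifs
      · exact tevOk_pr_one_zero hb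
      · exact tevOk_neutral ht
  resp := by
    rintro _ _ _ (⟨-, -, -, -, rfl, rfl, rfl⟩ | ⟨j, rfl, rfl, rfl⟩ | ⟨i, rfl, rfl, rfl⟩)
    · exact tevStep_neutral t (Nat.zero_le b)
    · have hne : j.castSucc ≠ j.succ := Fin.castSucc_lt_succ.ne
      dsimp only [Sum.elim_inl, Sum.elim_inr]
      by_cases h₁ : j.castSucc = k
      · subst h₁
        simp [hne.symm, tevStep]
      · by_cases h₂ : j.succ = k
        · subst h₂
          simp [h₁, tevStep, hb]
        · simp only [if_neg h₁, if_neg h₂]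
          exact tevStep_neutral t (Nat.zero_le b)
    · dsimp only [Sum.elim_inl, Sum.elim_inr]
      split_ifs
      · simp [tevStep]
      · exact tevStep_neutral t (Nat.zero_le b)

theorem joiningConnectorIndicator_sup_eq_zero (hb : 1 ≤ b) (ht : t ≤ 3) {k : Fin (n + 1)}
    {st : S ⊕ Fin (n + 1)} (h : st ≠ Sum.inr k) :
    (Region.joiningConnectorIndicator (F := F) (s0 := s0) (h0 := h0) hb ht k).sup st = 0 := by
  rcases st with a | q
  · rfl
  · exact if_neg fun hq => h (congrArg Sum.inr hq)

theorem joiningConnectorIndicator_solvesSSP (hb : 1 ≤ b) (ht : t ≤ 3) {k : Fin (n + 1)}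
    {st : S ⊕ Fin (n + 1)} (h : st ≠ Sum.inr k) :
    (Region.joiningConnectorIndicator (F := F) (s0 := s0) (h0 := h0) hb ht k).solvesSSP
      (Sum.inr k) st := by
  rw [Region.solvesSSP, joiningConnectorIndicator_sup_eq_zero hb ht h]
  exact (if_pos rfl).trans_ne one_ne_zero

theorem joiningConnectorIndicator_solvesESSP_w (hb : 1 ≤ b) (ht : t ≤ 3) {j : Fin n}
    {st : S ⊕ Fin (n + 1)} (h : st ≠ Sum.inr j.castSucc) :
    (Region.joiningConnectorIndicator (F := F) (s0 := s0) (h0 := h0) hb ht j.castSucc).solvesESSP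
      (Sum.inr (Sum.inl j)) st := by
  rw [Region.solvesESSP, joiningConnectorIndicator_sup_eq_zero hb ht h]
  simp [Region.joiningConnectorIndicator, tevStep]

theorem joiningConnectorIndicator_solvesESSP_y (hb : 1 ≤ b) (ht : t ≤ 3) {i : Fin (n + 1)}
    {st : S ⊕ Fin (n + 1)} (h : st ≠ Sum.inr i) :
    (Region.joiningConnectorIndicator (F := F) (s0 := s0) (h0 := h0) hb ht i).solvesESSP
      (Sum.inr (Sum.inr i)) st := by
  rw [Region.solvesESSP, joiningConnectorIndicator_sup_eq_zero hb ht h]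
  simp [Region.joiningConnectorIndicator, tevStep]

open Classical in
noncomputable def Region.joiningComponentIndicator (hb : 1 ≤ b) (ht : t ≤ 3)
    (hdisj : ∀ i j, i ≠ j → Disjoint (F i).states (F j).states) (k : Fin (n + 1)) :
    Region b t (joining F s0 h0) where
  sup := Sum.elim (fun a => if a ∈ (F k).states then 1 else 0) fun _ => 0
  sig := Sum.elim (fun _ => neutral t) <|
    Sum.elim (fun _ => neutral t) fun i => if i = k then .pr 0 1 else neutral t
  sup_le := by
    rintro (a | q) _
    · dsimp only [Sum.elim_inl]; split_ifs <;> omega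
    · exact Nat.zero_le b
  sig_ok := by
    rintro (e | j | i) _ <;> dsimp only [Sum.elim_inl, Sum.elim_inr]
    · exact tevOk_neutral ht
    · exact tevOk_neutral ht
    · split_ifs
      · exact tevOk_pr_zero_one hb
      · exact tevOk_neutral ht
  resp := by
    rintro _ _ _ (⟨a, e, a', ⟨i, h⟩, rfl, rfl, rfl⟩ | ⟨j, rfl, rfl, rfl⟩ | ⟨i, rfl, rfl, rfl⟩)
    · obtain ⟨ha, -, ha'⟩ := (F i).tr_mem h
      dsimp only [Sum.elim_inl]
      by_cases hik : i = k
      · subst hik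
        rw [if_pos ha, if_pos ha']
        exact tevStep_neutral t hb
      · have hd := Set.disjoint_left.mp (hdisj i k hik)
        rw [if_neg (hd ha), if_neg (hd ha')]
        exact tevStep_neutral t (Nat.zero_le b)
    · exact tevStep_neutral t (Nat.zero_le b)
    · dsimp only [Sum.elim_inl, Sum.elim_inr]
      by_cases hik : i = k
      · subst hik
        rw [if_pos rfl, if_pos (h0 i)]
        simp [tevStep, hb]
      · rw [if_neg hik, if_neg (Set.disjoint_left.mp (hdisj i k hik) (h0 i))]
        exact tevStep_neutral t (Nat.zero_le b)

theorem joiningComponentIndicator_solvesSSP (hb : 1 ≤ b) (ht : t ≤ 3)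
    (hdisj : ∀ i j, i ≠ j → Disjoint (F i).states (F j).states) {k : Fin (n + 1)} {s s' : S}
    (hs : s ∈ (F k).states) (hs' : s' ∉ (F k).states) :
    (Region.joiningComponentIndicator (s0 := s0) (h0 := h0) hb ht hdisj k).solvesSSP
      (Sum.inl s) (Sum.inl s') := by
  classical
  simp [Region.solvesSSP, Region.joiningComponentIndicator, hs, hs']

theorem hasESSP_joining (hb : 1 ≤ b) (ht : t ≤ 3)
    (hmiss : ∀ e ∈ (TS.unionFam F).events, ∃ s ∈ (TS.unionFam F).states,
      ¬ (TS.unionFam F).occurs e s)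
    (hU : (TS.unionFam F).hasESSP b t) : (joining F s0 h0).hasESSP b t := by
  rintro (e | j | i) hev st hst hnocc
  · have he := inl_mem_joining_events.1 hev
    rcases st with s | q
    · obtain ⟨R, hR⟩ := hU e he s (inl_mem_joining_states.1 hst)
        (mt joining_occurs_inl_inl.2 hnocc)
      exact ⟨R.extendJoining ht 0 (Nat.zero_le b), hR⟩
    · obtain ⟨s, hs, hno⟩ := hmiss e he
      obtain ⟨R, hR⟩ := hU e he s hs hno
      exact ⟨R.extendJoining ht (R.sup s) (R.sup_le s hs), hR⟩
  · exact ⟨_, joiningConnectorIndicator_solvesESSP_w hb ht fun h => hnocc (h ▸ joining_occurs_w j)⟩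
  · exact ⟨_, joiningConnectorIndicator_solvesESSP_y hb ht fun h => hnocc (h ▸ joining_occurs_y i)⟩

theorem hasESSP_of_hasESSP_joining (hA : (joining F s0 h0).hasESSP b t) :
    (TS.unionFam F).hasESSP b t := by
  intro e he s hs hno
  obtain ⟨R, hR⟩ := hA _ (inl_mem_joining_events.2 he) _ (inl_mem_joining_states.2 hs)
    (mt joining_occurs_inl_inl.1 hno)
  exact ⟨R.restrictJoining, hR⟩

theorem hasSSP_joining (hb : 1 ≤ b) (ht : t ≤ 3)
    (hdisj : ∀ i j, i ≠ j → Disjoint (F i).states (F j).states)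
    (hU : unionSSP b t F) : (joining F s0 h0).hasSSP b t := by
  rintro (s | q) hst (s' | q') _ hne
  · obtain ⟨k, hs⟩ := Set.mem_iUnion.1 (inl_mem_joining_states.1 hst)
    by_cases hs' : s' ∈ (F k).states
    · obtain ⟨R, hR⟩ := hU k s hs s' hs' fun h => hne (congrArg Sum.inl h)
      exact ⟨R.extendJoining ht 0 (Nat.zero_le b), hR⟩
    · exact ⟨_, joiningComponentIndicator_solvesSSP hb ht hdisj hs hs'⟩
  · exact ⟨_, Ne.symm (joiningConnectorIndicator_solvesSSP hb ht Sum.inl_ne_inr)⟩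
  · exact ⟨_, joiningConnectorIndicator_solvesSSP hb ht Sum.inl_ne_inr⟩
  · exact ⟨_, joiningConnectorIndicator_solvesSSP hb ht (Ne.symm hne)⟩

theorem unionSSP_of_hasSSP_joining (hA : (joining F s0 h0).hasSSP b t) : unionSSP b t F := by
  intro k s hs s' hs' hne
  obtain ⟨R, hR⟩ := hA _ (inl_mem_joining_states.2 (Set.mem_iUnion.2 ⟨k, hs⟩))
    _ (inl_mem_joining_states.2 (Set.mem_iUnion.2 ⟨k, hs'⟩)) (Sum.inl_injective.ne hne)
  exact ⟨R.restrictJoining, hR⟩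

end Joining

/-- Lemma 2 of the paper: if `U = U(A_0,…,A_n)` is a union of TSs
(with pairwise disjoint state sets) such that every event of `U` does not occur at some
state of `U`, then `U` has the `τ`-ESSP (resp. `τ`-SSP) iff the joining `A(U)` has the
`τ`-ESSP (resp. `τ`-SSP), for every `τ ∈ {τ^b_0, τ^b_1, τ^b_2, τ^b_3}`. -/
theorem stmt2 {S E : Type} (b t : ℕ)
    (hbt : ((t = 0 ∨ t = 1) ∧ 1 ≤ b) ∨ ((t = 2 ∨ t = 3) ∧ 2 ≤ b))
    (n : ℕ) (F : Fin (n + 1) → TS S E)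
    (hdisj : ∀ i j, i ≠ j → Disjoint (F i).states (F j).states)
    (s0 : Fin (n + 1) → S) (h0 : ∀ i, s0 i ∈ (F i).states)
    (hmiss : ∀ e ∈ (TS.unionFam F).events, ∃ s ∈ (TS.unionFam F).states,
      ¬ (TS.unionFam F).occurs e s) :
    ((TS.unionFam F).hasESSP b t ↔ (joining F s0 h0).hasESSP b t) ∧
    (unionSSP b t F ↔ (joining F s0 h0).hasSSP b t) := by
  have hb : 1 ≤ b := by omega
  have ht : t ≤ 3 := by omega
  exact ⟨⟨hasESSP_joining hb ht hmiss, hasESSP_of_hasESSP_joining⟩,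
    ⟨hasSSP_joining hb ht hdisj, unionSSP_of_hasSSP_joining⟩⟩
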